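/- Let R be a Noetherian ring, M a finitely generated R-module, and n ≥ 0. The set of primes p ∈ Spec R such that M_p has projective dimension at most n over R_p is open in Spec R. -/

import Mathlib

universe u

open IsLocalRing

/-- `ProjDimLE R n M` : `M` admits a resolution of length at most `n`
by finitely generated projective `R`-modules. -/
def ProjDimLE (R : Type u) [CommRing R] :
    ℕ → ∀ (M : Type u) [AddCommGroup M] [Module R M], Prop
  | 0, M, _, _ => Module.Finite R M ∧ Module.Projective R M
  | n + 1, M, _, _ => ∃ (k : ℕ) (f : (Fin k → R) →ₗ[R] M),
      Function.Surjective f ∧ ProjDimLE R n ↥(LinearMap.ker f)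

/-- A local ring is regular if the minimal number of generators of the maximal ideal
(the dimension of the cotangent space over the residue field) equals the Krull dimension. -/
def IsRegularLocal (R : Type u) [CommRing R] [IsLocalRing R] : Prop :=
  (Module.finrank (ResidueField R) (CotangentSpace R) : WithBot ℕ∞) = ringKrullDim R

section Aux

open LinearMap

variable {R M N P : Type*} [CommRing R] [AddCommGroup M] [Module R M]
    [AddCommGroup N] [Module R N] [AddCommGroup P] [Module R P]

/-- A split surjection decomposes the source as kernel times target. -/
noncomputable def splitEquiv (f : M →ₗ[R] N) (s : N →ₗ[R] M)
    (hs : f ∘ₗ s = LinearMap.id) : M ≃ₗ[R] (ker f × N) :=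
  LinearEquiv.ofLinear
    (LinearMap.prod ((LinearMap.id - s ∘ₗ f).codRestrict (ker f)
      (fun m => by
        have := LinearMap.congr_fun hs (f m)
        simp only [mem_ker, LinearMap.sub_apply, id_apply, comp_apply, map_sub] at this ⊢
        simp [this]))
      f)
    ((ker f).subtype.comp (fst R _ _) + s.comp (snd R _ _))
    (by
      ext x
      · simp [Subtype.ext_iff, (mem_ker).mp x.2, LinearMap.congr_fun hs]
      · simp [(mem_ker).mp x.2]
      · have := LinearMap.congr_fun hs x
        simp only [comp_apply, id_apply] at this
        simp [this]
      · have := LinearMap.congr_fun hs x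
        simp only [comp_apply, id_apply] at this
        simp [this])
    (by
      ext m
      simp)

/-- A surjection onto a projective module splits. -/
theorem exists_splitEquiv (f : M →ₗ[R] N) (hf : Function.Surjective f)
    [Module.Projective R N] : Nonempty (M ≃ₗ[R] (ker f × N)) := by
  obtain ⟨s, hs⟩ := Module.projective_lifting_property f LinearMap.id hf
  exact ⟨splitEquiv f s hs⟩

/-- Precomposing with an equivalence gives an equivalent kernel. -/
noncomputable def kerCompEquiv (e : M ≃ₗ[R] N) (g : N →ₗ[R] P) :
    ker (g ∘ₗ (e : M →ₗ[R] N)) ≃ₗ[R] ker g :=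
  (LinearEquiv.ofEq _ _ (ker_comp _ _)).trans (LinearEquiv.ofSubmodule' e (ker g))

/-- Kernel of a composite with a surjection, when the second kernel is projective. -/
theorem kerComp_split (q : M →ₗ[R] N) (p : N →ₗ[R] P) (hq : Function.Surjective q)
    [Module.Projective R (ker p)] :
    Nonempty (↥(ker (p ∘ₗ q)) ≃ₗ[R] (↥(ker q) × ↥(ker p))) := by
  have hmem : ∀ x ∈ ker (p ∘ₗ q), q x ∈ ker p := fun x hx => by simpa using hx
  set q' : ker (p ∘ₗ q) →ₗ[R] ker p := q.restrict hmem with hq'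
  have hq's : Function.Surjective q' := by
    rintro ⟨y, hy⟩
    obtain ⟨x, rfl⟩ := hq y
    exact ⟨⟨x, by simpa using hy⟩, rfl⟩
  have hle : ker q ≤ ker (p ∘ₗ q) := by intro x hx; simp [mem_ker.mp hx]
  have hkq' : ker q' = (ker q).comap (ker (p ∘ₗ q)).subtype := by
    ext z; simp [hq', LinearMap.restrict_apply, Subtype.ext_iff]
  obtain ⟨e⟩ := exists_splitEquiv q' hq's
  refine ⟨e.trans (LinearEquiv.prodCongr ?_ (LinearEquiv.refl R _))⟩
  exact (LinearEquiv.ofEq _ _ hkq').trans (Submodule.comapSubtypeEquivOfLe hle)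

theorem schanuel_aux (f : M →ₗ[R] P) (g : N →ₗ[R] P) (hf : Function.Surjective f)
    [Module.Projective R N] :
    Nonempty (↥(ker ((f ∘ₗ fst R M N) - (g ∘ₗ snd R M N))) ≃ₗ[R] (↥(ker f) × N)) := by
    set d : M × N →ₗ[R] P := (f ∘ₗ fst R M N) - (g ∘ₗ snd R M N) with hd
    set π : ker d →ₗ[R] N := (snd R M N) ∘ₗ (ker d).subtype with hπ
    have hπapp : ∀ z : ker d, π z = (z : M × N).2 := fun z => rfl
    have hπs : Function.Surjective π := by
      intro y
      obtain ⟨x, hx⟩ := hf (g y)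
      exact ⟨⟨(x, y), by simp [hd, hx]⟩, rfl⟩
    obtain ⟨e⟩ := exists_splitEquiv π hπs
    refine ⟨e.trans (LinearEquiv.prodCongr ?_ (LinearEquiv.refl R N))⟩
    have hmemf : ∀ z : ker π, (z : ker d).1.1 ∈ ker f := by
      rintro ⟨⟨⟨a, b⟩, hab⟩, hz⟩
      have hb : b = 0 := mem_ker.mp hz
      have h1 : f a - g b = 0 := mem_ker.mp hab
      rw [hb, map_zero, sub_zero] at h1
      exact mem_ker.mpr h1
    refine LinearEquiv.ofBijective
      (((fst R M N) ∘ₗ (ker d).subtype ∘ₗ (ker π).subtype).codRestrict (ker f)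
        (fun z => hmemf z)) ⟨?_, ?_⟩
    · rintro ⟨⟨⟨a, b⟩, hab⟩, hz⟩ ⟨⟨⟨a', b'⟩, ha'b'⟩, hz'⟩ h
      have hb : b = 0 := mem_ker.mp hz
      have hb' : b' = 0 := mem_ker.mp hz'
      have ha : a = a' := congrArg Subtype.val h
      subst hb hb' ha
      rfl
    · rintro ⟨x, hx⟩
      refine ⟨⟨⟨(x, 0), by simp [hd, mem_ker.mp hx]⟩, mem_ker.mpr rfl⟩, rfl⟩

/-- Schanuel's lemma. -/
theorem schanuel (f : M →ₗ[R] P) (g : N →ₗ[R] P) (hf : Function.Surjective f)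
    (hg : Function.Surjective g) [Module.Projective R M] [Module.Projective R N] :
    Nonempty ((↥(ker f) × N) ≃ₗ[R] (↥(ker g) × M)) := by
  obtain ⟨e₁⟩ := schanuel_aux f g hf
  obtain ⟨e₂⟩ := schanuel_aux g f hg
  set d : M × N →ₗ[R] P := (f ∘ₗ fst R M N) - (g ∘ₗ snd R M N) with hd
  set d' : N × M →ₗ[R] P := (g ∘ₗ fst R N M) - (f ∘ₗ snd R N M) with hd'
  have hker : ker d' = ker (d ∘ₗ (LinearEquiv.prodComm R N M).toLinearMap) := by
    ext x
    simp only [hd, hd', mem_ker, LinearMap.sub_apply, comp_apply, fst_apply, snd_apply,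
      LinearEquiv.coe_coe, LinearEquiv.prodComm_apply, Prod.fst_swap, Prod.snd_swap,
      sub_eq_zero]
    exact ⟨fun h => h.symm, fun h => h.symm⟩
  have c : ↥(ker d') ≃ₗ[R] ↥(ker d) :=
    (LinearEquiv.ofEq _ _ hker).trans (kerCompEquiv (LinearEquiv.prodComm R N M) d)
  exact ⟨e₁.symm.trans (c.symm.trans e₂)⟩


theorem projDimLE_congr (R : Type u) [CommRing R] :
    ∀ (n : ℕ) {M N : Type u} [AddCommGroup M] [Module R M] [AddCommGroup N] [Module R N],
      (M ≃ₗ[R] N) → ProjDimLE R n M → ProjDimLE R n N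
  | 0, M, N, _, _, _, _, e, ⟨h1, h2⟩ => ⟨Module.Finite.equiv e, Module.Projective.of_equiv e⟩
  | (n+1), M, N, _, _, _, _, e, ⟨k, f, hf, hk⟩ =>
    ⟨k, e.toLinearMap ∘ₗ f, e.surjective.comp hf,
      projDimLE_congr R n
        (LinearEquiv.ofEq _ _ (ker_comp_of_ker_eq_bot f e.ker).symm) hk⟩

noncomputable def kerFstEquiv (F : Type*) [AddCommGroup F] [Module R F] :
    ↥(ker (fst R N F)) ≃ₗ[R] F :=
  LinearEquiv.ofBijective ((snd R N F) ∘ₗ (ker (fst R N F)).subtype)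
    ⟨by
      rintro ⟨⟨a, b⟩, ha⟩ ⟨⟨a', b'⟩, ha'⟩ h
      have h1 : a = 0 := mem_ker.mp ha
      have h2 : a' = 0 := mem_ker.mp ha'
      have h3 : b = b' := h
      subst h1 h2 h3; rfl,
      fun y => ⟨⟨(0, y), mem_ker.mpr rfl⟩, rfl⟩⟩

noncomputable def kerProdMapIdEquiv (f : M →ₗ[R] N) (F : Type*) [AddCommGroup F]
    [Module R F] : ↥(ker (f.prodMap (LinearMap.id : F →ₗ[R] F))) ≃ₗ[R] ↥(ker f) :=
  LinearEquiv.ofBijective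
    (((fst R M F) ∘ₗ (ker (f.prodMap LinearMap.id)).subtype).codRestrict (ker f)
      (fun z => by
        have := mem_ker.mp z.2
        rw [prodMap_apply, Prod.ext_iff] at this
        exact mem_ker.mpr this.1))
    ⟨by
      rintro ⟨⟨a, b⟩, hab⟩ ⟨⟨a', b'⟩, ha'b'⟩ h
      have h1 := mem_ker.mp hab
      have h2 := mem_ker.mp ha'b'
      rw [prodMap_apply, Prod.ext_iff] at h1 h2
      have ha : a = a' := congrArg Subtype.val h
      have hb : b = b' := by simp only [id_apply] at h1 h2; rw [h1.2, h2.2]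
      subst ha hb; rfl,
      by
        rintro ⟨x, hx⟩
        exact ⟨⟨(x, 0), by simp [mem_ker, mem_ker.mp hx]⟩, rfl⟩⟩

noncomputable def prodSubsingletonEquiv (F : Type*) [AddCommGroup F] [Module R F]
    [Subsingleton F] : (M × F) ≃ₗ[R] M :=
  LinearEquiv.ofBijective (fst R M F)
    ⟨by
      rintro ⟨a, b⟩ ⟨a', b'⟩ h
      have : b = b' := Subsingleton.elim _ _
      simp only [fst_apply] at h
      rw [Prod.ext_iff]; exact ⟨h, this⟩,
      fun y => ⟨(y, 0), rfl⟩⟩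

theorem projDimLE_stable (R : Type u) [CommRing R] :
    ∀ (n : ℕ) {M N : Type u} [AddCommGroup M] [Module R M] [AddCommGroup N] [Module R N]
      (a b : ℕ), ((M × (Fin a → R)) ≃ₗ[R] (N × (Fin b → R))) →
      ProjDimLE R n M → ProjDimLE R n N := by
  intro n
  induction n with
  | zero =>
    intro M N _ _ _ _ a b e hM
    obtain ⟨h1, h2⟩ := hM
    have : Module.Finite R (M × (Fin a → R)) := Module.Finite.prod
    have : Module.Projective R (M × (Fin a → R)) := inferInstance
    have hNb1 : Module.Finite R (N × (Fin b → R)) := Module.Finite.equiv e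
    have hNb2 : Module.Projective R (N × (Fin b → R)) := Module.Projective.of_equiv e
    constructor
    · exact Module.Finite.of_surjective (fst R N (Fin b → R))
        (fun y => ⟨(y, 0), rfl⟩)
    · exact Module.Projective.of_split (LinearMap.inl R N (Fin b → R))
        (LinearMap.fst R N (Fin b → R)) (by ext <;> simp)
  | succ n ih =>
    intro M N _ _ _ _ a b e hM
    obtain ⟨k, f, hf, hK⟩ := hM
    set Fa := (Fin a → R)
    set Fb := (Fin b → R)
    set q : ((Fin k → R) × Fa) →ₗ[R] (M × Fa) := f.prodMap LinearMap.id with hq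
    have hqs : Function.Surjective q := by
      rw [hq]; rw [coe_prodMap]
      exact Function.Surjective.prodMap hf Function.surjective_id
    set g₁ : (M × Fa) →ₗ[R] N := (fst R N Fb) ∘ₗ e.toLinearMap with hg₁
    have hg₁s : Function.Surjective g₁ := by
      intro y
      exact ⟨e.symm (y, 0), by simp [hg₁]⟩
    have ekg₁ : ↥(ker g₁) ≃ₗ[R] Fb := (kerCompEquiv e (fst R N Fb)).trans (kerFstEquiv Fb)
    have : Module.Projective R ↥(ker g₁) := Module.Projective.of_equiv ekg₁.symm
    obtain ⟨esplit⟩ := kerComp_split q g₁ hqs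
    -- ker (g₁ ∘ₗ q) ≃ ker q × ker g₁ ≃ ker f × Fb
    have ekq : ↥(ker q) ≃ₗ[R] ↥(ker f) := kerProdMapIdEquiv f Fa
    have ebig : ↥(ker (g₁ ∘ₗ q)) ≃ₗ[R] (↥(ker f) × Fb) :=
      esplit.trans (LinearEquiv.prodCongr ekq ekg₁)
    -- now reindex the source
    set ef : (Fin (k + a) → R) ≃ₗ[R] ((Fin k → R) × Fa) :=
      (LinearEquiv.piCongrLeft' R (fun _ => R) finSumFinEquiv.symm).trans
        (LinearEquiv.sumArrowLequivProdArrow _ _ R R) with hef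
    refine ⟨k + a, (g₁ ∘ₗ q) ∘ₗ ef.toLinearMap, ?_, ?_⟩
    · exact (hg₁s.comp hqs).comp ef.surjective
    · have e2 : ↥(ker ((g₁ ∘ₗ q) ∘ₗ ef.toLinearMap)) ≃ₗ[R] (↥(ker f) × Fb) :=
        (kerCompEquiv ef (g₁ ∘ₗ q)).trans ebig
      -- ProjDimLE n (ker f) and (ker f × Fb) ≃ (ker .. × F0)
      refine ih b 0 ?_ hK
      exact (e2.symm.trans (prodSubsingletonEquiv (Fin 0 → R)).symm)

theorem projDimLE_of_surjective (R : Type u) [CommRing R] (n k : ℕ) (M : Type u)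
    [AddCommGroup M] [Module R M] (f : (Fin k → R) →ₗ[R] M) (hf : Function.Surjective f)
    (h : ProjDimLE R (n + 1) M) : ProjDimLE R n ↥(ker f) := by
  obtain ⟨m, g, hg, hK⟩ := h
  obtain ⟨e⟩ := schanuel g f hg hf
  exact projDimLE_stable R n k m e hK

section Pi

variable {R : Type*} [CommRing R] (S : Submonoid R) {ι : Type*} [Fintype ι] [DecidableEq ι]
  {Ms Ns : ι → Type*} [∀ i, AddCommGroup (Ms i)] [∀ i, Module R (Ms i)]
  [∀ i, AddCommGroup (Ns i)] [∀ i, Module R (Ns i)]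

theorem isLocalizedModule_pi (f : ∀ i, Ms i →ₗ[R] Ns i) [∀ i, IsLocalizedModule S (f i)] :
    IsLocalizedModule S
      (LinearMap.pi (fun i => (f i) ∘ₗ LinearMap.proj i) :
        (∀ i, Ms i) →ₗ[R] (∀ i, Ns i)) := by
  constructor
  · intro s
    rw [Module.End.isUnit_iff]
    constructor
    · intro v w h
      funext i
      have hi := (Module.End.isUnit_iff _).mp (IsLocalizedModule.map_units (f i) s)
      apply hi.1
      simpa [Module.algebraMap_end_apply] using congrFun h i
    · intro v
      have hi := fun i => (Module.End.isUnit_iff _).mp (IsLocalizedModule.map_units (f i) s)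
      choose w hw using fun i => (hi i).2 (v i)
      exact ⟨fun i => w i, funext fun i => hw i⟩
  · intro y
    choose x hx using fun i => IsLocalizedModule.surj S (f i) (y i)
    refine ⟨⟨fun i => (∏ j ∈ Finset.univ.erase i, ((x j).2 : R)) • (x i).1,
      ∏ j, (x j).2⟩, funext fun i => ?_⟩
    have key : (∏ j, ((x j).2 : R)) = (∏ j ∈ Finset.univ.erase i, ((x j).2 : R)) * ((x i).2 : R) :=
      (Finset.prod_erase_mul _ _ (Finset.mem_univ i)).symm
    calc ((∏ j, (x j).2 : S) : S) • y i
        = (∏ j, ((x j).2 : R)) • y i := by rw [Submonoid.smul_def]; norm_cast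
      _ = (∏ j ∈ Finset.univ.erase i, ((x j).2 : R)) • (((x i).2 : R) • y i) := by
          rw [key, mul_smul]
      _ = (∏ j ∈ Finset.univ.erase i, ((x j).2 : R)) • f i (x i).1 := by
          rw [← hx i]; rw [Submonoid.smul_def]
      _ = f i ((∏ j ∈ Finset.univ.erase i, ((x j).2 : R)) • (x i).1) := (map_smul _ _ _).symm
  · intro x₁ x₂ h
    choose c hc using fun i => IsLocalizedModule.exists_of_eq (S := S) (f := f i)
      (congrFun h i)
    refine ⟨∏ j, c j, funext fun i => ?_⟩
    have key : (∏ j, ((c j) : R)) = (∏ j ∈ Finset.univ.erase i, ((c j) : R)) * ((c i) : R) :=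
      (Finset.prod_erase_mul _ _ (Finset.mem_univ i)).symm
    calc ((∏ j, c j : S) : S) • x₁ i
        = (∏ j ∈ Finset.univ.erase i, ((c j) : R)) • (((c i) : R) • x₁ i) := by
          rw [Submonoid.smul_def]; push_cast [key]; rw [mul_smul]
      _ = (∏ j ∈ Finset.univ.erase i, ((c j) : R)) • (((c i) : R) • x₂ i) := by
          rw [← Submonoid.smul_def (c i), ← Submonoid.smul_def (c i)]
          have := hc i
          simp only [LinearMap.proj_apply] at this
          rw [this]
      _ = ((∏ j, c j : S) : S) • x₂ i := by
          rw [Submonoid.smul_def]; push_cast [key]; rw [mul_smul]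

end Pi

/-- upgrade an `R`-linear equiv between modules over a localization to a linear equiv. -/
noncomputable def LinearEquiv.extendScalarsOfIsLocalization' {R : Type*} [CommSemiring R]
    (S : Submonoid R) (A : Type*) [CommSemiring A] [Algebra R A] [IsLocalization S A]
    {M N : Type*} [AddCommMonoid M] [AddCommMonoid N] [Module R M] [Module R N]
    [Module A M] [Module A N] [IsScalarTower R A M] [IsScalarTower R A N]
    (e : M ≃ₗ[R] N) : M ≃ₗ[A] N :=
  LinearEquiv.ofLinear (e.toLinearMap.extendScalarsOfIsLocalization S A)
    (e.symm.toLinearMap.extendScalarsOfIsLocalization S A)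
    (by ext x; simp) (by ext x; simp)

open IsLocalRing

theorem main_aux (R : Type u) [CommRing R] [IsNoetherianRing R] (n : ℕ) :
    ∀ (M : Type u) [AddCommGroup M] [Module R M] [Module.Finite R M],
    IsOpen {p : PrimeSpectrum R |
      ProjDimLE (Localization.AtPrime p.asIdeal) n
        (LocalizedModule p.asIdeal.primeCompl M)} := by
  induction n with
  | zero =>
    intro M _ _ _
    have : Module.FinitePresentation R M := Module.finitePresentation_of_finite R M
    have hset : {p : PrimeSpectrum R |
        ProjDimLE (Localization.AtPrime p.asIdeal) 0
          (LocalizedModule p.asIdeal.primeCompl M)} = Module.freeLocus R M := by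
      ext p
      set S := p.asIdeal.primeCompl
      set Rp := Localization.AtPrime p.asIdeal
      have hNoeth : IsNoetherianRing Rp := IsLocalization.isNoetherianRing S Rp ‹_›
      have hfin : Module.Finite Rp (LocalizedModule S M) :=
        Module.Finite.of_isLocalizedModule S (LocalizedModule.mkLinearMap S M)
      constructor
      · rintro ⟨h1, h2⟩
        have : Module.Flat Rp (LocalizedModule S M) := Module.Flat.of_projective
        have : Module.FinitePresentation Rp (LocalizedModule S M) :=
          Module.finitePresentation_of_finite Rp _
        exact Module.mem_freeLocus.mpr (Module.free_of_flat_of_isLocalRing)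
      · intro h
        have hfree : Module.Free Rp (LocalizedModule S M) := Module.mem_freeLocus.mp h
        exact ⟨hfin, inferInstance⟩
    rw [hset]
    exact Module.isOpen_freeLocus
  | succ n ih =>
    intro M _ _ _
    obtain ⟨k, f, hf⟩ := Module.Finite.exists_fin' R M
    have : IsNoetherian R M := inferInstance
    have hKfin : Module.Finite R ↥(ker f) :=
      Module.Finite.iff_fg.mpr (IsNoetherian.noetherian _)
    have hset : {p : PrimeSpectrum R |
        ProjDimLE (Localization.AtPrime p.asIdeal) (n + 1)
          (LocalizedModule p.asIdeal.primeCompl M)} =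
        {p : PrimeSpectrum R |
        ProjDimLE (Localization.AtPrime p.asIdeal) n
          (LocalizedModule p.asIdeal.primeCompl ↥(ker f))} := by
      ext p
      set S := p.asIdeal.primeCompl
      set Rp := Localization.AtPrime p.asIdeal with hRp
      set mkF := LocalizedModule.mkLinearMap S (Fin k → R)
      set mkM := LocalizedModule.mkLinearMap S M
      set g0 : LocalizedModule S (Fin k → R) →ₗ[R] LocalizedModule S M :=
        IsLocalizedModule.map S mkF mkM f with hg0
      have hg0s : Function.Surjective g0 := IsLocalizedModule.map_surjective S mkF mkM f hf
      set gE : LocalizedModule S (Fin k → R) →ₗ[Rp] LocalizedModule S M :=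
        g0.extendScalarsOfIsLocalization S Rp with hgE
      have hgEs : Function.Surjective gE := hg0s
      -- the pi localization equivalence
      set π : (Fin k → R) →ₗ[R] (Fin k → Rp) :=
        LinearMap.pi (fun i => (Algebra.linearMap R Rp) ∘ₗ LinearMap.proj i) with hπ
      have hπloc : IsLocalizedModule S π := isLocalizedModule_pi S _
      have e0 : LocalizedModule S (Fin k → R) ≃ₗ[R] (Fin k → Rp) :=
        IsLocalizedModule.iso S π
      have eπ : LocalizedModule S (Fin k → R) ≃ₗ[Rp] (Fin k → Rp) :=
        LinearEquiv.extendScalarsOfIsLocalization' S Rp e0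
      set g : (Fin k → Rp) →ₗ[Rp] LocalizedModule S M := gE ∘ₗ eπ.symm.toLinearMap with hg
      have hgs : Function.Surjective g := hgEs.comp eπ.symm.surjective
      -- kernels
      have ekg : ↥(ker g) ≃ₗ[Rp] ↥(ker gE) := kerCompEquiv eπ.symm gE
      -- ker g0 localizes ker f
      have hkerloc : IsLocalizedModule S (LinearMap.toKerIsLocalized S mkF mkM f) :=
        LinearMap.toKerLocalized_isLocalizedModule Rp S mkF mkM f
      have eK0 : LocalizedModule S ↥(ker f) ≃ₗ[R] ↥(ker g0) :=
        IsLocalizedModule.iso S (LinearMap.toKerIsLocalized S mkF mkM f)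
      have hker_eq : ker g0 = (ker gE).restrictScalars R := rfl
      have eKK : ↥(ker g0) ≃ₗ[R] ↥(ker gE) :=
        (LinearEquiv.ofEq _ _ hker_eq).trans ((Submodule.restrictScalarsEquiv R Rp (LocalizedModule S (Fin k → R)) (ker gE)).restrictScalars R)
      have eK : LocalizedModule S ↥(ker f) ≃ₗ[Rp] ↥(ker gE) :=
        LinearEquiv.extendScalarsOfIsLocalization' S Rp (eK0.trans eKK)
      constructor
      · intro hM
        have h1 : ProjDimLE Rp n ↥(ker g) :=
          projDimLE_of_surjective Rp n k _ g hgs hM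
        exact projDimLE_congr Rp n (ekg.trans eK.symm) h1
      · intro hK
        refine ⟨k, g, hgs, ?_⟩
        exact projDimLE_congr Rp n (eK.trans ekg.symm) hK
    rw [hset]
    exact ih ↥(ker f)

end Aux

/-- for a finitely generated module `M` over a Noetherian ring `R` and
`n ≥ 0`, the locus of primes `p` where `M_p` has projective dimension at most `n`
over `R_p` is open in `Spec R`. -/
theorem stmt_10 (R : Type u) [CommRing R] [IsNoetherianRing R]
    (M : Type u) [AddCommGroup M] [Module R M] [Module.Finite R M] (n : ℕ) :
    IsOpen {p : PrimeSpectrum R |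
      ProjDimLE (Localization.AtPrime p.asIdeal) n
        (LocalizedModule p.asIdeal.primeCompl M)} := by
  exact main_aux R n M
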